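/- Let X = [0,1] with the Euclidean metric and let F = ([0,1/2] × {0}) ∪ ([1/2,1] × {1}) ∪ ({1} × [0,1]) ⊆ X × X. Then the CR-dynamical system (X,F) satisfies p₁(F) = p₂(F) = X but does not have the initial specification property (ISP). -/
import Mathlib


/-- Iterated images of a point under a relation `F ⊆ X × X`:
`relIter F 0 x = {x}` and `relIter F (n+1) x = ⋃ z ∈ relIter F n x, F(z)`. -/
def relIter {X : Type*} (F : Set (X × X)) : ℕ → X → Set X
  | 0, x => {x}
  | n + 1, x => {y | ∃ z ∈ relIter F n x, (z, y) ∈ F}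

/-- The distance between two sets: `inf {dist a b | a ∈ A, b ∈ B}`. -/
noncomputable def setDist {X : Type*} [MetricSpace X] (A B : Set X) : ℝ :=
  sInf (Set.image2 dist A B)

/-- The specification property (`SP`) for a CR-dynamical system `(X, F)`. -/
def CRSpec {X : Type*} [MetricSpace X] (F : Set (X × X)) : Prop :=
  ∀ ε : ℝ, 0 < ε → ∃ N : ℕ, 0 < N ∧
    ∀ (n : ℕ) (x : ℕ → X) (k ℓ : ℕ → ℕ),
      (∀ i, i < n → k i ≤ ℓ i) →
      (∀ i, i + 1 < n → ℓ i + N ≤ k (i + 1)) →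
      ∃ y : X, ∀ i, i < n → ∀ j, k i ≤ j → j ≤ ℓ i →
        setDist (relIter F j y) (relIter F j (x i)) ≤ ε

/-- The Hausdorff specification property (`HSP`) for a CR-dynamical system
`(X, F)`. -/
def CRHSpec {X : Type*} [MetricSpace X] (F : Set (X × X)) : Prop :=
  ∀ ε : ℝ, 0 < ε → ∃ N : ℕ, 0 < N ∧
    ∀ (n : ℕ) (x : ℕ → X) (k ℓ : ℕ → ℕ),
      (∀ i, i < n → k i ≤ ℓ i) →
      (∀ i, i + 1 < n → ℓ i + N ≤ k (i + 1)) →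
      ∃ y : X, ∀ i, i < n → ∀ j, k i ≤ j → j ≤ ℓ i →
        Metric.hausdorffDist (relIter F j y) (relIter F j (x i)) ≤ ε

/-- The initial specification property (`ISP`) for a CR-dynamical system
`(X, F)`. -/
def CRInitSpec {X : Type*} [MetricSpace X] (F : Set (X × X)) : Prop :=
  ∀ ε : ℝ, 0 < ε → ∃ N : ℕ, 0 < N ∧
    ∀ (n : ℕ), 1 ≤ n → ∀ (x : ℕ → X) (ℓ m : ℕ → ℕ),
      (∀ i, i + 1 < n → N ≤ m i) →
      ∃ y : X, ∀ i, i < n → ∀ j, j ≤ ℓ i →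
        setDist (relIter F ((∑ t ∈ Finset.range i, (ℓ t + m t)) + j) y)
          (relIter F j (x i)) ≤ ε

/-- The Hausdorff initial specification property (`HISP`) for a CR-dynamical
system `(X, F)`. -/
def CRHInitSpec {X : Type*} [MetricSpace X] (F : Set (X × X)) : Prop :=
  ∀ ε : ℝ, 0 < ε → ∃ N : ℕ, 0 < N ∧
    ∀ (n : ℕ), 1 ≤ n → ∀ (x : ℕ → X) (ℓ m : ℕ → ℕ),
      (∀ i, i + 1 < n → N ≤ m i) →
      ∃ y : X, ∀ i, i < n → ∀ j, j ≤ ℓ i →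
        Metric.hausdorffDist
          (relIter F ((∑ t ∈ Finset.range i, (ℓ t + m t)) + j) y)
          (relIter F j (x i)) ≤ ε

/-- The closed relation
`F = ([0,1/2] × {0}) ∪ ([1/2,1] × {1}) ∪ ({1} × [0,1])` on `X = [0,1]`. -/
def exampleRel : Set (Set.Icc (0 : ℝ) 1 × Set.Icc (0 : ℝ) 1) :=
  {p | (p.1.1 ≤ 1 / 2 ∧ p.2.1 = 0) ∨ (1 / 2 ≤ p.1.1 ∧ p.2.1 = 1) ∨ p.1.1 = 1}


namespace ExampleRelAux

abbrev XX := Set.Icc (0 : ℝ) 1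

noncomputable def z0 : XX := ⟨0, by norm_num⟩
noncomputable def hf : XX := ⟨1/2, by norm_num⟩
noncomputable def one : XX := ⟨1, by norm_num⟩

lemma step (y : XX) (hy : y.1 ≤ 1/4) :
    {w : XX | (y, w) ∈ exampleRel} = {z0} := by
  ext w
  simp only [Set.mem_setOf_eq, exampleRel, Set.mem_singleton_iff]
  constructor
  · rintro (⟨_, hw⟩ | ⟨h2, _⟩ | h3)
    · exact Subtype.ext hw
    · linarith
    · linarith
  · rintro rfl
    exact Or.inl ⟨by linarith, rfl⟩

lemma iter (y : XX) (hy : y.1 ≤ 1/4) :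
    ∀ n : ℕ, 1 ≤ n → relIter exampleRel n y = {z0} := by
  intro n hn
  induction n with
  | zero => omega
  | succ n ih =>
    by_cases h : n = 0
    · subst h
      have h1 : relIter exampleRel 1 y = {w : XX | (y, w) ∈ exampleRel} := by
        ext w; simp [relIter]
      rw [h1, step y hy]
    · have hn' : 1 ≤ n := Nat.one_le_iff_ne_zero.mpr h
      have h1 : relIter exampleRel (n + 1) y
          = {w : XX | ∃ z ∈ relIter exampleRel n y, (z, w) ∈ exampleRel} := rfl
      rw [h1, ih hn']
      have h2 : {w : XX | ∃ z ∈ ({z0} : Set XX), (z, w) ∈ exampleRel}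
          = {w : XX | (z0, w) ∈ exampleRel} := by
        ext w; simp
      rw [h2, step z0 (by norm_num [z0])]

lemma setDist_singleton (a b : XX) : setDist {a} {b} = dist a b := by
  unfold setDist
  rw [Set.image2_singleton_left, Set.image_singleton, csInf_singleton]

end ExampleRelAux

/-- With `X = [0,1]` and
`F = ([0,1/2] × {0}) ∪ ([1/2,1] × {1}) ∪ ({1} × [0,1])`, the CR-dynamical
system `(X, F)` satisfies `p₁(F) = p₂(F) = X` but does not have the initial
specification property (ISP). -/
theorem exampleRel_surjective_not_crInitSpec :
    Prod.fst '' exampleRel = Set.univ ∧ Prod.snd '' exampleRel = Set.univ ∧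
      ¬ CRInitSpec exampleRel := by
  refine ⟨?_, ?_, ?_⟩
  · ext x
    simp only [Set.mem_image, Set.mem_univ, iff_true]
    by_cases h : x.1 ≤ 1/2
    · exact ⟨(x, ExampleRelAux.z0), Or.inl ⟨h, rfl⟩, rfl⟩
    · exact ⟨(x, ExampleRelAux.one),
        Or.inr (Or.inl ⟨le_of_lt (not_le.mp h), rfl⟩), rfl⟩
  · ext x
    simp only [Set.mem_image, Set.mem_univ, iff_true]
    exact ⟨(ExampleRelAux.one, x), Or.inr (Or.inr rfl), rfl⟩
  · intro h
    obtain ⟨N, hN, hspec⟩ := h (1/4) (by norm_num)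
    obtain ⟨y, hy⟩ := hspec 2 (by norm_num)
      (fun i => if i = 0 then ExampleRelAux.z0 else ExampleRelAux.hf)
      (fun _ => 0) (fun _ => N) (fun i _ => le_refl N)
    have h0 := hy 0 (by norm_num) 0 (le_refl 0)
    have h1 := hy 1 (by norm_num) 0 (le_refl 0)
    simp only [Finset.range_zero, Finset.sum_empty, Finset.range_one,
      Finset.sum_singleton, Nat.zero_add, Nat.add_zero, Nat.one_ne_zero,
      reduceIte, if_true, if_false] at h0 h1
    -- h0 : setDist (relIter _ 0 y) (relIter _ 0 z0) ≤ 1/4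
    have hy14 : y.1 ≤ 1/4 := by
      have e0 : relIter exampleRel 0 y = {y} := rfl
      have e1 : relIter exampleRel 0 ExampleRelAux.z0 = {ExampleRelAux.z0} := rfl
      rw [e0, e1, ExampleRelAux.setDist_singleton] at h0
      have := abs_le.mp (by simpa [Subtype.dist_eq, Real.dist_eq,
        ExampleRelAux.z0] using h0)
      linarith [this.2]
    have h1' : setDist (relIter exampleRel N y)
        (relIter exampleRel 0 ExampleRelAux.hf) ≤ 1/4 := by
      simpa using h1
    rw [ExampleRelAux.iter y hy14 N hN] at h1'
    have e1 : relIter exampleRel 0 ExampleRelAux.hf = {ExampleRelAux.hf} := rfl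
    rw [e1, ExampleRelAux.setDist_singleton] at h1'
    rw [Subtype.dist_eq, Real.dist_eq] at h1'
    norm_num [ExampleRelAux.z0, ExampleRelAux.hf, abs_le] at h1'
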